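/- Let Λ ∈ S ∖ 𝒩. Then the first return time τ(Λ) = inf{t > 0 : g_tΛ ∈ S} is finite, R(Λ) = g_{τ(Λ)}Λ ∈ S, and τ(Λ) = (1/(d+c))·(ρ(R(Λ)) + ρ*(Λ)), where for Γ ∈ S with associated vectors v₀(Γ), v₁(Γ) one sets ρ(Γ) = ln(|v₁(Γ)|_- /|v₀(Γ)|_-) and ρ*(Γ) = ln(|v₀(Γ)|_+/|v₁(Γ)|_+). -/

import Mathlib

open MeasureTheory Filter Topology

noncomputable section

/-- Horizontal component (first `d` coordinates) of `x ∈ ℝ^{d+c}`, in Euclidean `ℝ^d`;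
`|x|_+ = ‖hp d c x‖`. -/
def hp (d c : ℕ) (x : Fin (d + c) → ℝ) : EuclideanSpace ℝ (Fin d) :=
  WithLp.toLp 2 fun i => x (Fin.castAdd c i)

/-- Vertical component (last `c` coordinates) of `x ∈ ℝ^{d+c}`, in Euclidean `ℝ^c`;
the height is `|x|_- = ‖vp d c x‖`. -/
def vp (d c : ℕ) (x : Fin (d + c) → ℝ) : EuclideanSpace ℝ (Fin c) :=
  WithLp.toLp 2 fun j => x (Fin.natAdd d j)

/-- The lattice `M·ℤ^n ⊆ ℝ^n` spanned by the columns of `M`. -/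
def latSet {n : ℕ} (M : Matrix (Fin n) (Fin n) ℝ) : Set (Fin n → ℝ) :=
  Set.range fun v : Fin n → ℤ => M.mulVec fun i => (v i : ℝ)

/-- `X` is a minimal vector of `Λ ⊆ ℝ^{d+c}`: any nonzero `Y ∈ Λ` with `|Y|_+ ≤ |X|_+` and
`|Y|_- ≤ |X|_-` satisfies `|Y|_+ = |X|_+` and `|Y|_- = |X|_-`. -/
def IsMinVec (d c : ℕ) (Λ : Set (Fin (d + c) → ℝ)) (X : Fin (d + c) → ℝ) : Prop :=
  X ∈ Λ ∧ X ≠ 0 ∧ ∀ Y ∈ Λ, Y ≠ 0 → ‖hp d c Y‖ ≤ ‖hp d c X‖ → ‖vp d c Y‖ ≤ ‖vp d c X‖ →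
    ‖hp d c Y‖ = ‖hp d c X‖ ∧ ‖vp d c Y‖ = ‖vp d c X‖

/-- `X` and `Y` are (representatives of) consecutive minimal vectors of `Λ`, ordered by
height: no equivalence class of minimal vectors has height strictly between those of `X`
and `Y`. -/
def ConsecMin (d c : ℕ) (Λ : Set (Fin (d + c) → ℝ)) (X Y : Fin (d + c) → ℝ) : Prop :=
  IsMinVec d c Λ X ∧ IsMinVec d c Λ Y ∧ ‖vp d c X‖ < ‖vp d c Y‖ ∧
    ∀ Z, IsMinVec d c Λ Z → ‖vp d c X‖ < ‖vp d c Z‖ → ‖vp d c Y‖ ≤ ‖vp d c Z‖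

/-- The diagonal matrix `g_t = diag(e^{ct}·I_d, e^{-dt}·I_c)` of the flow. -/
def gtMat (d c : ℕ) (t : ℝ) : Matrix (Fin (d + c)) (Fin (d + c)) ℝ :=
  Matrix.diagonal
    (Fin.append (fun _ : Fin d => Real.exp (c * t)) (fun _ : Fin c => Real.exp (-(d * t))))

lemma gtMat_det (d c : ℕ) (t : ℝ) : (gtMat d c t).det = 1 := by
  rw [gtMat, Matrix.det_diagonal, Fin.prod_univ_add]
  simp only [Fin.append_left, Fin.append_right, Finset.prod_const, Finset.card_univ,
    Fintype.card_fin, ← Real.exp_nat_mul, ← Real.exp_add, Real.exp_eq_one_iff]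
  ring

/-- The max-norm `‖x‖_{ℝ^{d+c}} = max(|x|_+, |x|_-)`. -/
def fullNorm (d c : ℕ) (x : Fin (d + c) → ℝ) : ℝ := max ‖hp d c x‖ ‖vp d c x‖

/-- First minimum `λ₁(Λ)` of `Λ` for the max-norm. -/
def lambda1 (d c : ℕ) (Λ : Set (Fin (d + c) → ℝ)) : ℝ :=
  sInf (fullNorm d c '' {x | x ∈ Λ ∧ x ≠ 0})

/-- `v₀, v₁` witness membership of `Λ` in the transversal `S`: they are linearly independent,
`|v₁|_+` and `|v₀|_-` are `< |v₁|_- = |v₀|_+`, and the only nonzero points of `Λ` in the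
closed ball of radius `λ₁(Λ)` are `±v₀, ±v₁`. -/
def SWitness (d c : ℕ) (Λ : Set (Fin (d + c) → ℝ)) (v₀ v₁ : Fin (d + c) → ℝ) : Prop :=
  v₀ ∈ Λ ∧ v₁ ∈ Λ ∧ LinearIndependent ℝ ![v₀, v₁] ∧
    ‖hp d c v₁‖ < ‖vp d c v₁‖ ∧ ‖vp d c v₀‖ < ‖vp d c v₁‖ ∧ ‖vp d c v₁‖ = ‖hp d c v₀‖ ∧
    ∀ x ∈ Λ, x ≠ 0 → fullNorm d c x ≤ lambda1 d c Λ → x = v₀ ∨ x = -v₀ ∨ x = v₁ ∨ x = -v₁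

/-- The transversal `S` (as a predicate on lattices of `ℝ^{d+c}`). -/
def SPred (d c : ℕ) (Λ : Set (Fin (d + c) → ℝ)) : Prop := ∃ v₀ v₁, SWitness d c Λ v₀ v₁

/-- `w` witnesses membership of `Λ` in the transversal `S'`: the only nonzero points of `Λ`
in the closed ball of radius `λ₁(Λ)` are `±w`, and this ball equals the cylinder `C(w)`. -/
def S'Witness (d c : ℕ) (Λ : Set (Fin (d + c) → ℝ)) (w : Fin (d + c) → ℝ) : Prop :=
  w ∈ Λ ∧ w ≠ 0 ∧
    (∀ x ∈ Λ, x ≠ 0 → fullNorm d c x ≤ lambda1 d c Λ → x = w ∨ x = -w) ∧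
    {x : Fin (d + c) → ℝ | fullNorm d c x ≤ lambda1 d c Λ} =
      {x : Fin (d + c) → ℝ | ‖hp d c x‖ ≤ ‖hp d c w‖ ∧ ‖vp d c x‖ ≤ ‖vp d c w‖}

/-- The transversal `S'` (as a predicate on lattices of `ℝ^{d+c}`). -/
def S'Pred (d c : ℕ) (Λ : Set (Fin (d + c) → ℝ)) : Prop := ∃ w, S'Witness d c Λ w

/-- The exceptional set `𝒩`: lattices having two nonzero vectors `v₁ ≠ ±v₂` with equal
positive horizontal norms or equal positive heights, or a nonzero vector in the vertical
subspace `{0}×ℝ^c` or in the horizontal subspace `ℝ^d×{0}`. -/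
def NPred (d c : ℕ) (Λ : Set (Fin (d + c) → ℝ)) : Prop :=
  (∃ v₁ ∈ Λ, ∃ v₂ ∈ Λ, v₁ ≠ 0 ∧ v₂ ≠ 0 ∧ v₁ ≠ v₂ ∧ v₁ ≠ -v₂ ∧
    ((‖hp d c v₁‖ = ‖hp d c v₂‖ ∧ 0 < ‖hp d c v₁‖) ∨
     (‖vp d c v₁‖ = ‖vp d c v₂‖ ∧ 0 < ‖vp d c v₁‖))) ∨
  (∃ v ∈ Λ, v ≠ 0 ∧ (hp d c v = 0 ∨ vp d c v = 0))

namespace FRT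

variable {d c : ℕ}

lemma hp_neg (x : Fin (d + c) → ℝ) : hp d c (-x) = -hp d c x := rfl

lemma vp_neg (x : Fin (d + c) → ℝ) : vp d c (-x) = -vp d c x := rfl

lemma norm_hp_neg (x : Fin (d + c) → ℝ) : ‖hp d c (-x)‖ = ‖hp d c x‖ := by
  rw [hp_neg, norm_neg]

lemma norm_vp_neg (x : Fin (d + c) → ℝ) : ‖vp d c (-x)‖ = ‖vp d c x‖ := by
  rw [vp_neg, norm_neg]

lemma fullNorm_neg (x : Fin (d + c) → ℝ) : fullNorm d c (-x) = fullNorm d c x := by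
  unfold fullNorm; rw [norm_hp_neg, norm_vp_neg]

lemma fullNorm_nonneg (x : Fin (d + c) → ℝ) : 0 ≤ fullNorm d c x :=
  le_trans (norm_nonneg _) (le_max_left _ _)

lemma euclid_abs_le {n : ℕ} (y : EuclideanSpace ℝ (Fin n)) (i : Fin n) : |y i| ≤ ‖y‖ := by
  rw [EuclideanSpace.norm_eq]
  have h1 : |y i| = Real.sqrt (|y i| ^ 2) := by
    rw [Real.sqrt_sq_eq_abs, abs_abs]
  rw [h1]
  apply Real.sqrt_le_sqrt
  have := Finset.single_le_sum (f := fun j => ‖y j‖ ^ 2)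
    (fun j _ => sq_nonneg _) (Finset.mem_univ i)
  simpa [Real.norm_eq_abs] using this

lemma abs_coord_le_fullNorm (x : Fin (d + c) → ℝ) (j : Fin (d + c)) :
    |x j| ≤ fullNorm d c x := by
  induction j using Fin.addCases with
  | left i => exact le_trans (euclid_abs_le (hp d c x) i) (le_max_left _ _)
  | right i => exact le_trans (euclid_abs_le (vp d c x) i) (le_max_right _ _)

lemma eq_zero_of_hp_vp (x : Fin (d + c) → ℝ) (h1 : hp d c x = 0) (h2 : vp d c x = 0) :
    x = 0 := by
  funext j
  induction j using Fin.addCases with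
  | left i => exact congrArg (fun v : EuclideanSpace ℝ (Fin d) => v i) h1
  | right i => exact congrArg (fun v : EuclideanSpace ℝ (Fin c) => v i) h2

/-! ### Flow lemmas -/

lemma gtMat_mulVec_apply (t : ℝ) (x : Fin (d + c) → ℝ) (j : Fin (d + c)) :
    ((gtMat d c t).mulVec x) j =
      Fin.append (fun _ : Fin d => Real.exp (c * t)) (fun _ : Fin c => Real.exp (-(d * t))) j
        * x j := by
  rw [gtMat, Matrix.mulVec_diagonal]

lemma hp_gtMat (t : ℝ) (x : Fin (d + c) → ℝ) :
    hp d c ((gtMat d c t).mulVec x) = Real.exp (c * t) • hp d c x := by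
  ext i
  show ((gtMat d c t).mulVec x) (Fin.castAdd c i) = Real.exp (c * t) * x (Fin.castAdd c i)
  rw [gtMat_mulVec_apply, Fin.append_left]

lemma vp_gtMat (t : ℝ) (x : Fin (d + c) → ℝ) :
    vp d c ((gtMat d c t).mulVec x) = Real.exp (-(d * t)) • vp d c x := by
  ext i
  show ((gtMat d c t).mulVec x) (Fin.natAdd d i) = Real.exp (-(d * t)) * x (Fin.natAdd d i)
  rw [gtMat_mulVec_apply, Fin.append_right]

lemma norm_hp_gtMat (t : ℝ) (x : Fin (d + c) → ℝ) :
    ‖hp d c ((gtMat d c t).mulVec x)‖ = Real.exp (c * t) * ‖hp d c x‖ := by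
  rw [hp_gtMat, norm_smul, Real.norm_eq_abs, Real.abs_exp]

lemma norm_vp_gtMat (t : ℝ) (x : Fin (d + c) → ℝ) :
    ‖vp d c ((gtMat d c t).mulVec x)‖ = Real.exp (-(d * t)) * ‖vp d c x‖ := by
  rw [vp_gtMat, norm_smul, Real.norm_eq_abs, Real.abs_exp]

lemma gtMat_mul_gtMat (t s : ℝ) :
    gtMat d c t * gtMat d c s = gtMat d c (t + s) := by
  unfold gtMat
  rw [Matrix.diagonal_mul_diagonal]
  apply congrArg Matrix.diagonal
  funext j
  show _ * _ = _
  induction j using Fin.addCases with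
  | left i =>
      rw [Fin.append_left, Fin.append_left, Fin.append_left, ← Real.exp_add]
      ring_nf
  | right i =>
      rw [Fin.append_right, Fin.append_right, Fin.append_right, ← Real.exp_add]
      ring_nf

lemma gtMat_zero : gtMat d c 0 = 1 := by
  unfold gtMat
  have : (Fin.append (fun _ : Fin d => Real.exp (c * 0)) fun _ : Fin c => Real.exp (-(d * 0)))
      = fun _ : Fin (d + c) => (1 : ℝ) := by
    funext j
    induction j using Fin.addCases with
    | left i => rw [Fin.append_left]; simp
    | right i => rw [Fin.append_right]; simp
  rw [this]
  exact Matrix.diagonal_one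

lemma gtMat_inv_mulVec (t : ℝ) (x : Fin (d + c) → ℝ) :
    (gtMat d c (-t)).mulVec ((gtMat d c t).mulVec x) = x := by
  rw [Matrix.mulVec_mulVec, gtMat_mul_gtMat, neg_add_cancel, gtMat_zero, Matrix.one_mulVec]

lemma gtMat_mulVec_inj (t : ℝ) {x y : Fin (d + c) → ℝ}
    (h : (gtMat d c t).mulVec x = (gtMat d c t).mulVec y) : x = y := by
  have := congrArg ((gtMat d c (-t)).mulVec) h
  rwa [gtMat_inv_mulVec, gtMat_inv_mulVec] at this

lemma gtMat_mulVec_zero (t : ℝ) : (gtMat d c t).mulVec (0 : Fin (d + c) → ℝ) = 0 :=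
  Matrix.mulVec_zero _

lemma gtMat_mulVec_ne_zero (t : ℝ) {x : Fin (d + c) → ℝ} (hx : x ≠ 0) :
    (gtMat d c t).mulVec x ≠ 0 := by
  intro h
  exact hx (gtMat_mulVec_inj t (h.trans (gtMat_mulVec_zero t).symm))

lemma gtMat_mulVec_neg (t : ℝ) (x : Fin (d + c) → ℝ) :
    (gtMat d c t).mulVec (-x) = -((gtMat d c t).mulVec x) :=
  Matrix.mulVec_neg _ _

lemma latSet_gtMat_mul (t : ℝ) (M : Matrix (Fin (d + c)) (Fin (d + c)) ℝ) :
    latSet (gtMat d c t * M) = (gtMat d c t).mulVec '' latSet M := by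
  have h : (fun v : Fin (d + c) → ℤ => (gtMat d c t * M).mulVec fun i => (v i : ℝ))
      = (gtMat d c t).mulVec ∘ (fun v : Fin (d + c) → ℤ => M.mulVec fun i => (v i : ℝ)) := by
    funext v
    exact (Matrix.mulVec_mulVec _ _ _).symm
  rw [latSet, latSet, h, Set.range_comp]

end FRT
namespace FRT

variable {d c : ℕ}

lemma latSet_bounded_finite (M : Matrix (Fin (d + c)) (Fin (d + c)) ℝ) (hM : M.det = 1)
    (R : ℝ) : {x | x ∈ latSet M ∧ fullNorm d c x ≤ R}.Finite := by
  have hdet : IsUnit M.det := by rw [hM]; exact isUnit_one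
  set N := M⁻¹ with hNdef
  have hNM : N * M = 1 := Matrix.nonsing_inv_mul M hdet
  set K : Fin (d + c) → ℝ := fun i => (∑ j, |N i j|) * max R 0 with hK
  have hfin : (Set.pi Set.univ fun i : Fin (d + c) =>
      (Set.Icc (-⌈K i⌉) ⌈K i⌉ : Set ℤ)).Finite :=
    Set.Finite.pi fun _ => Set.finite_Icc _ _
  apply Set.Finite.subset (hfin.image fun v => M.mulVec fun i => ((v i : ℤ) : ℝ))
  rintro x ⟨⟨v, rfl⟩, hx⟩
  refine ⟨v, fun i _ => ?_, rfl⟩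
  have hxv : ((v i : ℤ) : ℝ)
      = (N.mulVec (M.mulVec fun j => ((v j : ℤ) : ℝ))) i := by
    rw [Matrix.mulVec_mulVec, hNM, Matrix.one_mulVec]
  have hb : |((v i : ℤ) : ℝ)| ≤ K i := by
    rw [hxv]
    have h1 : (N.mulVec (M.mulVec fun j => ((v j : ℤ) : ℝ))) i
        = ∑ j, N i j * (M.mulVec fun k => ((v k : ℤ) : ℝ)) j := rfl
    rw [h1]
    calc |∑ j, N i j * (M.mulVec fun k => ((v k : ℤ) : ℝ)) j|
        ≤ ∑ j, |N i j * (M.mulVec fun k => ((v k : ℤ) : ℝ)) j| :=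
          Finset.abs_sum_le_sum_abs _ _
      _ ≤ ∑ j, |N i j| * max R 0 := by
          apply Finset.sum_le_sum
          intro j _
          rw [abs_mul]
          exact mul_le_mul_of_nonneg_left
            (le_trans (abs_coord_le_fullNorm _ j) (le_max_of_le_left hx)) (abs_nonneg _)
      _ = K i := by rw [hK, ← Finset.sum_mul]
  have hb2 : |v i| ≤ ⌈K i⌉ := by
    have : ((|v i| : ℤ) : ℝ) ≤ (⌈K i⌉ : ℝ) := by
      push_cast
      exact le_trans (by exact_mod_cast hb) (Int.le_ceil _)
    exact_mod_cast this
  exact Set.mem_Icc.mpr ⟨neg_le_of_abs_le hb2, le_of_abs_le hb2⟩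

end FRT
namespace FRT

variable {d c : ℕ}

lemma sum_zsmul_eq_mulVec (M : Matrix (Fin (d + c)) (Fin (d + c)) ℝ) (v : Fin (d + c) → ℤ) :
    ∑ i, v i • (fun j => M j i : Fin (d + c) → ℝ) = M.mulVec fun i => ((v i : ℤ) : ℝ) := by
  funext j
  rw [Finset.sum_apply]
  show ∑ i, (v i • (fun k => M k i : Fin (d + c) → ℝ)) j = ∑ i, M j i * ((v i : ℤ) : ℝ)
  apply Finset.sum_congr rfl
  intro i _
  show v i • M j i = M j i * ((v i : ℤ) : ℝ)
  rw [zsmul_eq_mul]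
  push_cast
  ring

lemma mem_latSet_iff {M : Matrix (Fin (d + c)) (Fin (d + c)) ℝ} {x : Fin (d + c) → ℝ} :
    x ∈ latSet M ↔ ∃ v : Fin (d + c) → ℤ, x = M.mulVec fun i => ((v i : ℤ) : ℝ) := by
  constructor
  · rintro ⟨v, rfl⟩
    exact ⟨v, rfl⟩
  · rintro ⟨v, rfl⟩
    exact ⟨v, rfl⟩

lemma latSet_exists_small_hp (hd : 0 < d) (hc : 0 < c)
    (M : Matrix (Fin (d + c)) (Fin (d + c)) ℝ) (hM : M.det = 1) {ε : ℝ} (hε : 0 < ε) :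
    ∃ y ∈ latSet M, y ≠ 0 ∧ ‖hp d c y‖ < ε := by
  classical
  have hdet : IsUnit M.det := by rw [hM]; exact isUnit_one
  haveI hInv : Invertible M := M.invertibleOfIsUnitDet hdet
  -- the basis given by the columns of `M`
  set b : Module.Basis (Fin (d + c)) ℝ (Fin (d + c) → ℝ) :=
    (Pi.basisFun ℝ (Fin (d + c))).map (M.toLinearEquiv' hInv) with hb
  have hbi : ∀ i, b i = fun j => M j i := by
    intro i
    rw [hb, Module.Basis.map_apply, Pi.basisFun_apply]
    show M.toLin' (Pi.single i 1) = _
    rw [Matrix.toLin'_apply, Matrix.mulVec_single_one]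
    rfl
  have hspan : ((Submodule.span ℤ (Set.range b) : Submodule ℤ (Fin (d + c) → ℝ)) :
      Set (Fin (d + c) → ℝ)) = latSet M := by
    ext x
    rw [SetLike.mem_coe, Submodule.mem_span_range_iff_exists_fun]
    rw [mem_latSet_iff]
    constructor
    · rintro ⟨v, hv⟩
      refine ⟨v, ?_⟩
      rw [← hv, ← sum_zsmul_eq_mulVec M v]
      apply Finset.sum_congr rfl
      intro i _
      rw [hbi i]
    · rintro ⟨v, rfl⟩
      refine ⟨v, ?_⟩
      rw [← sum_zsmul_eq_mulVec M v]
      apply Finset.sum_congr rfl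
      intro i _
      rw [hbi i]
  -- countability of the lattice
  have hcnt : ((Submodule.span ℤ (Set.range b)).toAddSubgroup :
      Set (Fin (d + c) → ℝ)).Countable := by
    rw [Submodule.coe_toAddSubgroup, hspan]
    exact Set.countable_range _
  haveI : Countable ((Submodule.span ℤ (Set.range b)).toAddSubgroup) := hcnt.to_subtype
  -- the fundamental domain and its volume
  have fund := ZSpan.isAddFundamentalDomain' b (volume : Measure (Fin (d + c) → ℝ))
  have hvolF : volume (ZSpan.fundamentalDomain b) = 1 := by
    rw [ZSpan.volume_fundamentalDomain]
    have hmat : (Matrix.of ⇑b) = M.transpose := by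
      ext i j
      rw [Matrix.of_apply, Matrix.transpose_apply]
      exact congrFun (hbi i) j
    rw [hmat, Matrix.det_transpose, hM]
    simp
  -- the convex symmetric box
  set ε' : ℝ := ε / (d + 1) with hε'
  have hε'pos : 0 < ε' := by positivity
  set R : ℝ := max 1 (2 / ε' ^ d) with hR
  have hR1 : (1 : ℝ) ≤ R := le_max_left _ _
  have hRpos : 0 < R := lt_of_lt_of_le one_pos hR1
  set a : Fin (d + c) → ℝ := Fin.append (fun _ : Fin d => ε') fun _ : Fin c => R with ha
  have hapos : ∀ j, 0 < a j := by
    intro j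
    induction j using Fin.addCases with
    | left i => rw [ha, Fin.append_left]; exact hε'pos
    | right i => rw [ha, Fin.append_right]; exact hRpos
  set s : Set (Fin (d + c) → ℝ) := Set.pi Set.univ fun j => Set.Icc (-(a j)) (a j) with hs
  have h_symm : ∀ x ∈ s, -x ∈ s := by
    intro x hx j hj
    have h := hx j hj
    rw [Set.mem_Icc] at h
    have : (-x) j = -(x j) := rfl
    rw [this, Set.mem_Icc]
    constructor <;> linarith [h.1, h.2]
  have h_conv : Convex ℝ s := convex_pi fun j _ => convex_Icc _ _
  have hvols : volume s = ∏ j, ENNReal.ofReal (2 * a j) := by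
    rw [hs, volume_pi_pi]
    apply Finset.prod_congr rfl
    intro j _
    rw [Real.volume_Icc]
    congr 1
    ring
  have hlt : volume (ZSpan.fundamentalDomain b) * 2 ^ Module.finrank ℝ (Fin (d + c) → ℝ)
      < volume s := by
    rw [hvolF, one_mul, hvols, Module.finrank_fintype_fun_eq_card, Fintype.card_fin]
    rw [Fin.prod_univ_add]
    have h1 : ∀ i : Fin d, ENNReal.ofReal (2 * a (Fin.castAdd c i)) = ENNReal.ofReal (2 * ε') := by
      intro i; rw [ha, Fin.append_left]
    have h2 : ∀ i : Fin c, ENNReal.ofReal (2 * a (Fin.natAdd d i)) = ENNReal.ofReal (2 * R) := by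
      intro i; rw [ha, Fin.append_right]
    rw [Finset.prod_congr rfl fun i _ => h1 i, Finset.prod_congr rfl fun i _ => h2 i]
    rw [Finset.prod_const, Finset.prod_const, Finset.card_univ, Finset.card_univ,
      Fintype.card_fin, Fintype.card_fin]
    rw [← ENNReal.ofReal_pow (by positivity), ← ENNReal.ofReal_pow (by positivity),
      ← ENNReal.ofReal_mul (by positivity)]
    have h2n : (2 : ENNReal) ^ (d + c) = ENNReal.ofReal (2 ^ (d + c)) := by
      rw [ENNReal.ofReal_pow (by norm_num), ENNReal.ofReal_ofNat]
    rw [h2n]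
    rw [ENNReal.ofReal_lt_ofReal_iff (by positivity)]
    have key : (2 : ℝ) ≤ ε' ^ d * R ^ c := by
      have hRc : R ≤ R ^ c := by
        calc R = R ^ 1 := (pow_one R).symm
        _ ≤ R ^ c := pow_le_pow_right₀ hR1 hc
      calc (2 : ℝ) = ε' ^ d * (2 / ε' ^ d) := by field_simp
      _ ≤ ε' ^ d * R := mul_le_mul_of_nonneg_left (le_max_right _ _) (by positivity)
      _ ≤ ε' ^ d * R ^ c := mul_le_mul_of_nonneg_left hRc (by positivity)
    calc (2 : ℝ) ^ (d + c) = 2 ^ (d + c) * 1 := (mul_one _).symm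
    _ < 2 ^ (d + c) * (ε' ^ d * R ^ c) :=
        (mul_lt_mul_iff_right₀ (by positivity)).mpr (lt_of_lt_of_le one_lt_two key)
    _ = (2 * ε') ^ d * (2 * R) ^ c := by rw [mul_pow, mul_pow, pow_add]; ring
  obtain ⟨x, hx0, hxs⟩ := exists_ne_zero_mem_lattice_of_measure_mul_two_pow_lt_measure
    fund h_symm h_conv hlt
  refine ⟨(x : Fin (d + c) → ℝ), ?_, ?_, ?_⟩
  · rw [← hspan]
    exact x.2
  · intro h
    exact hx0 (Subtype.ext h)
  · -- estimate the horizontal norm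
    have hcoord : ∀ i : Fin d, |(x : Fin (d + c) → ℝ) (Fin.castAdd c i)| ≤ ε' := by
      intro i
      have := hxs (Fin.castAdd c i) (Set.mem_univ _)
      rw [Set.mem_Icc] at this
      have haa : a (Fin.castAdd c i) = ε' := by rw [ha, Fin.append_left]
      rw [haa] at this
      exact abs_le.mpr this
    have hnorm : ‖hp d c (x : Fin (d + c) → ℝ)‖ ≤ Real.sqrt d * ε' := by
      rw [EuclideanSpace.norm_eq]
      have hsum : ∑ i : Fin d, ‖hp d c (x : Fin (d + c) → ℝ) i‖ ^ 2 ≤ d * ε' ^ 2 := by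
        calc ∑ i : Fin d, ‖hp d c (x : Fin (d + c) → ℝ) i‖ ^ 2
            ≤ ∑ _i : Fin d, ε' ^ 2 := by
              apply Finset.sum_le_sum
              intro i _
              rw [Real.norm_eq_abs]
              exact pow_le_pow_left₀ (abs_nonneg _) (hcoord i) 2
        _ = d * ε' ^ 2 := by rw [Finset.sum_const, Finset.card_univ, Fintype.card_fin]; simp
      calc Real.sqrt (∑ i : Fin d, ‖hp d c (x : Fin (d + c) → ℝ) i‖ ^ 2)
          ≤ Real.sqrt (d * ε' ^ 2) := Real.sqrt_le_sqrt hsum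
      _ = Real.sqrt d * ε' := by
          rw [Real.sqrt_mul (by positivity), Real.sqrt_sq hε'pos.le]
    have hsd : Real.sqrt d * ε' < ε := by
      have h1 : Real.sqrt d ≤ d := by
        have hd1 : (1 : ℝ) ≤ d := by exact_mod_cast hd
        calc Real.sqrt d ≤ Real.sqrt ((d : ℝ) ^ 2) := Real.sqrt_le_sqrt (by nlinarith)
        _ = d := Real.sqrt_sq (by positivity)
      calc Real.sqrt d * ε' ≤ d * ε' := mul_le_mul_of_nonneg_right h1 hε'pos.le
      _ < (d + 1) * ε' := by nlinarith
      _ = ε := by rw [hε']; field_simp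
    exact lt_of_le_of_lt hnorm hsd

end FRT
namespace FRT

variable {d c : ℕ} {Λ : Set (Fin (d + c) → ℝ)}

/-- Positivity of the two component norms, for nonzero vectors of a lattice avoiding `𝒩`. -/
lemma pos_norms (hN : ¬ NPred d c Λ) {x : Fin (d + c) → ℝ} (hx : x ∈ Λ) (hx0 : x ≠ 0) :
    0 < ‖hp d c x‖ ∧ 0 < ‖vp d c x‖ := by
  constructor
  · refine norm_pos_iff.mpr fun h => hN (Or.inr ⟨x, hx, hx0, Or.inl h⟩)
  · refine norm_pos_iff.mpr fun h => hN (Or.inr ⟨x, hx, hx0, Or.inr h⟩)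

lemma eq_or_neg_of_hp_eq (hN : ¬ NPred d c Λ) {x y : Fin (d + c) → ℝ}
    (hx : x ∈ Λ) (hy : y ∈ Λ) (hx0 : x ≠ 0) (hy0 : y ≠ 0)
    (h : ‖hp d c x‖ = ‖hp d c y‖) : x = y ∨ x = -y := by
  by_contra hcon
  push_neg at hcon
  exact hN (Or.inl ⟨x, hx, y, hy, hx0, hy0, hcon.1, hcon.2,
    Or.inl ⟨h, (pos_norms hN hx hx0).1⟩⟩)

lemma eq_or_neg_of_vp_eq (hN : ¬ NPred d c Λ) {x y : Fin (d + c) → ℝ}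
    (hx : x ∈ Λ) (hy : y ∈ Λ) (hx0 : x ≠ 0) (hy0 : y ≠ 0)
    (h : ‖vp d c x‖ = ‖vp d c y‖) : x = y ∨ x = -y := by
  by_contra hcon
  push_neg at hcon
  exact hN (Or.inl ⟨x, hx, y, hy, hx0, hy0, hcon.1, hcon.2,
    Or.inr ⟨h, (pos_norms hN hx hx0).2⟩⟩)

lemma norms_eq_of_eq_or_neg {x y : Fin (d + c) → ℝ} (h : x = y ∨ x = -y) :
    ‖hp d c x‖ = ‖hp d c y‖ ∧ ‖vp d c x‖ = ‖vp d c y‖ := by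
  rcases h with rfl | rfl
  · exact ⟨rfl, rfl⟩
  · exact ⟨norm_hp_neg y, norm_vp_neg y⟩

/-- The first minimum is attained. -/
lemma lambda1_attained (hfin : ∀ R : ℝ, {x | x ∈ Λ ∧ fullNorm d c x ≤ R}.Finite)
    {x : Fin (d + c) → ℝ} (hx : x ∈ Λ) (hx0 : x ≠ 0) :
    ∃ x₀ ∈ Λ, x₀ ≠ 0 ∧ fullNorm d c x₀ = lambda1 d c Λ ∧
      ∀ y ∈ Λ, y ≠ 0 → lambda1 d c Λ ≤ fullNorm d c y := by
  set T := {y | y ∈ Λ ∧ y ≠ 0 ∧ fullNorm d c y ≤ fullNorm d c x} with hT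
  have hTfin : T.Finite := (hfin (fullNorm d c x)).subset fun y hy => ⟨hy.1, hy.2.2⟩
  have hTne : T.Nonempty := ⟨x, hx, hx0, le_refl _⟩
  obtain ⟨m, hmT, hmin⟩ := Set.exists_min_image T (fullNorm d c) hTfin hTne
  have hlow : ∀ y ∈ Λ, y ≠ 0 → fullNorm d c m ≤ fullNorm d c y := by
    intro y hy hy0
    by_cases hc' : fullNorm d c y ≤ fullNorm d c x
    · exact hmin y ⟨hy, hy0, hc'⟩
    · push_neg at hc'
      exact le_trans (hmin x ⟨hx, hx0, le_refl _⟩) hc'.le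
  have hIs : IsLeast (fullNorm d c '' {x | x ∈ Λ ∧ x ≠ 0}) (fullNorm d c m) := by
    constructor
    · exact ⟨m, ⟨hmT.1, hmT.2.1⟩, rfl⟩
    · rintro _ ⟨y, ⟨hy, hy0⟩, rfl⟩
      exact hlow y hy hy0
  have hlam : lambda1 d c Λ = fullNorm d c m := hIs.csInf_eq
  exact ⟨m, hmT.1, hmT.2.1, hlam.symm, fun y hy hy0 => hlam ▸ hlow y hy hy0⟩

/-- Any nonzero lattice vector dominates a minimal vector. -/
lemma exists_dominating_min (hfin : ∀ R : ℝ, {x | x ∈ Λ ∧ fullNorm d c x ≤ R}.Finite)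
    (hN : ¬ NPred d c Λ) {z : Fin (d + c) → ℝ} (hz : z ∈ Λ) (hz0 : z ≠ 0) :
    ∃ Y, IsMinVec d c Λ Y ∧ ‖hp d c Y‖ ≤ ‖hp d c z‖ ∧ ‖vp d c Y‖ ≤ ‖vp d c z‖ := by
  set T := {y | y ∈ Λ ∧ y ≠ 0 ∧ ‖hp d c y‖ ≤ ‖hp d c z‖ ∧ ‖vp d c y‖ ≤ ‖vp d c z‖} with hT
  have hTfin : T.Finite := (hfin (fullNorm d c z)).subset fun y hy =>
    ⟨hy.1, max_le (le_trans hy.2.2.1 (le_max_left _ _)) (le_trans hy.2.2.2 (le_max_right _ _))⟩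
  have hTne : T.Nonempty := ⟨z, hz, hz0, le_refl _, le_refl _⟩
  obtain ⟨Y, hYT, hYmin⟩ := Set.exists_min_image T (fun y => ‖hp d c y‖) hTfin hTne
  refine ⟨Y, ⟨hYT.1, hYT.2.1, ?_⟩, hYT.2.2.1, hYT.2.2.2⟩
  intro W hW hW0 hWh hWv
  have hWT : W ∈ T := ⟨hW, hW0, le_trans hWh hYT.2.2.1, le_trans hWv hYT.2.2.2⟩
  have h1 : ‖hp d c W‖ = ‖hp d c Y‖ := le_antisymm hWh (hYmin W hWT)
  have h2 := eq_or_neg_of_hp_eq hN hW hYT.1 hW0 hYT.2.1 h1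
  exact norms_eq_of_eq_or_neg h2

/-- Among minimal vectors, the horizontal norm is strictly antitone in the height. -/
lemma height_antitone {X Y : Fin (d + c) → ℝ} (hX : IsMinVec d c Λ X) (hY : IsMinVec d c Λ Y)
    (h : ‖vp d c X‖ < ‖vp d c Y‖) : ‖hp d c Y‖ < ‖hp d c X‖ := by
  by_contra h'
  push_neg at h'
  exact absurd (hY.2.2 X hX.1 hX.2.1 h' h.le).2 h.ne

/-- The minimal vector of next-larger height above a given minimal vector. -/
lemma exists_next (hfin : ∀ R : ℝ, {x | x ∈ Λ ∧ fullNorm d c x ≤ R}.Finite)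
    (hN : ¬ NPred d c Λ)
    (hsm : ∀ ε : ℝ, 0 < ε → ∃ y ∈ Λ, y ≠ 0 ∧ ‖hp d c y‖ < ε)
    {v : Fin (d + c) → ℝ} (hv : IsMinVec d c Λ v) :
    ∃ w, IsMinVec d c Λ w ∧ ‖vp d c v‖ < ‖vp d c w‖ ∧
      ∀ z, IsMinVec d c Λ z → ‖vp d c v‖ < ‖vp d c z‖ → ‖vp d c w‖ ≤ ‖vp d c z‖ := by
  have hvpos := pos_norms hN hv.1 hv.2.1
  obtain ⟨y, hy, hy0, hyh⟩ := hsm ‖hp d c v‖ hvpos.1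
  obtain ⟨Y, hYmin, hYh, hYv⟩ := exists_dominating_min hfin hN hy hy0
  have hYh' : ‖hp d c Y‖ < ‖hp d c v‖ := lt_of_le_of_lt hYh hyh
  have hYgt : ‖vp d c v‖ < ‖vp d c Y‖ := by
    rcases lt_trichotomy ‖vp d c Y‖ ‖vp d c v‖ with h | h | h
    · exact absurd (height_antitone hYmin hv h) (by linarith)
    · rcases eq_or_neg_of_vp_eq hN hYmin.1 hv.1 hYmin.2.1 hv.2.1 h with rfl | rfl
      · exact absurd rfl hYh'.ne
      · exact absurd (norm_hp_neg v) hYh'.ne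
    · exact h
  set T := {z | IsMinVec d c Λ z ∧ ‖vp d c v‖ < ‖vp d c z‖ ∧ ‖vp d c z‖ ≤ ‖vp d c Y‖} with hT
  have hTfin : T.Finite := by
    apply (hfin (max ‖hp d c v‖ ‖vp d c Y‖)).subset
    intro z hz
    refine ⟨hz.1.1, max_le ?_ (le_trans hz.2.2 (le_max_right _ _))⟩
    exact le_trans (height_antitone hv hz.1 hz.2.1).le (le_max_left _ _)
  have hTne : T.Nonempty := ⟨Y, hYmin, hYgt, le_refl _⟩
  obtain ⟨w, hwT, hwmin⟩ := Set.exists_min_image T (fun z => ‖vp d c z‖) hTfin hTne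
  refine ⟨w, hwT.1, hwT.2.1, ?_⟩
  intro z hz hzgt
  by_cases hcase : ‖vp d c z‖ ≤ ‖vp d c Y‖
  · exact hwmin z ⟨hz, hzgt, hcase⟩
  · push_neg at hcase
    exact le_trans hwT.2.2 hcase.le

/-- Structural consequences of an `S`-witness. -/
lemma SWitness_props (hfin : ∀ R : ℝ, {x | x ∈ Λ ∧ fullNorm d c x ≤ R}.Finite)
    {v₀ v₁ : Fin (d + c) → ℝ} (h : SWitness d c Λ v₀ v₁) :
    IsMinVec d c Λ v₀ ∧ IsMinVec d c Λ v₁ ∧ lambda1 d c Λ = ‖hp d c v₀‖ ∧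
      (∀ Z, IsMinVec d c Λ Z → ‖vp d c v₀‖ < ‖vp d c Z‖ → ‖vp d c v₁‖ ≤ ‖vp d c Z‖) := by
  obtain ⟨h0, h1, hli, hlt1, hlt0, heq, hball⟩ := h
  have hv00 : v₀ ≠ 0 := by
    have := hli.ne_zero 0
    simpa using this
  have hv10 : v₁ ≠ 0 := by
    have := hli.ne_zero 1
    simpa using this
  have hfn0 : fullNorm d c v₀ = ‖hp d c v₀‖ := max_eq_left (by rw [← heq]; exact hlt0.le)
  have hfn1 : fullNorm d c v₁ = ‖hp d c v₀‖ := by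
    rw [fullNorm, max_eq_right hlt1.le, heq]
  obtain ⟨m, hm, hm0, hmlam, hlow⟩ := lambda1_attained hfin h0 hv00
  have hlam : lambda1 d c Λ = ‖hp d c v₀‖ := by
    rcases hball m hm hm0 (le_of_eq hmlam) with rfl | rfl | rfl | rfl
    · rw [← hmlam, hfn0]
    · rw [← hmlam, fullNorm_neg, hfn0]
    · rw [← hmlam, hfn1]
    · rw [← hmlam, fullNorm_neg, hfn1]
  have hlow' : ∀ y ∈ Λ, y ≠ 0 → ‖hp d c v₀‖ ≤ fullNorm d c y := fun y hy hy0 =>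
    hlam ▸ hlow y hy hy0
  have hmin0 : IsMinVec d c Λ v₀ := by
    refine ⟨h0, hv00, fun Y hY hY0 hYh hYv => ?_⟩
    have hfb : fullNorm d c Y ≤ lambda1 d c Λ := by
      rw [hlam, fullNorm]
      exact max_le hYh (le_trans hYv (le_of_lt (lt_of_lt_of_le hlt0 (le_of_eq heq))))
    rcases hball Y hY hY0 hfb with rfl | rfl | rfl | rfl
    · exact ⟨rfl, rfl⟩
    · exact ⟨norm_hp_neg _, norm_vp_neg _⟩
    · exact absurd hYv (not_le.mpr hlt0)
    · rw [norm_vp_neg] at hYv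
      exact absurd hYv (not_le.mpr hlt0)
  have hmin1 : IsMinVec d c Λ v₁ := by
    refine ⟨h1, hv10, fun Y hY hY0 hYh hYv => ?_⟩
    have hfb : fullNorm d c Y ≤ lambda1 d c Λ := by
      rw [hlam, ← heq, fullNorm]
      exact max_le (le_trans hYh hlt1.le) hYv
    rcases hball Y hY hY0 hfb with rfl | rfl | rfl | rfl
    · exact absurd (lt_of_le_of_lt hYh hlt1) (not_lt.mpr (le_of_eq heq))
    · rw [norm_hp_neg] at hYh
      exact absurd (lt_of_le_of_lt hYh hlt1) (not_lt.mpr (le_of_eq heq))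
    · exact ⟨rfl, rfl⟩
    · exact ⟨norm_hp_neg _, norm_vp_neg _⟩
  refine ⟨hmin0, hmin1, hlam, ?_⟩
  intro Z hZ hZgt
  by_contra hcon
  push_neg at hcon
  have hZh : ‖hp d c Z‖ < ‖hp d c v₀‖ := height_antitone hmin0 hZ hZgt
  have : fullNorm d c Z < ‖hp d c v₀‖ :=
    max_lt hZh (lt_of_lt_of_le hcon (le_of_eq heq))
  exact absurd (hlow' Z hZ.1 hZ.2.1) (not_le.mpr this)

/-- Constructing an `S`-witness from a consecutive pair of minimal vectors at a tie. -/
lemma SWitness_mk (hfin : ∀ R : ℝ, {x | x ∈ Λ ∧ fullNorm d c x ≤ R}.Finite)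
    (hN : ¬ NPred d c Λ) {v₀ v₁ : Fin (d + c) → ℝ}
    (h0 : IsMinVec d c Λ v₀) (h1 : IsMinVec d c Λ v₁)
    (hlt : ‖vp d c v₀‖ < ‖vp d c v₁‖)
    (hcons : ∀ Z, IsMinVec d c Λ Z → ‖vp d c v₀‖ < ‖vp d c Z‖ → ‖vp d c v₁‖ ≤ ‖vp d c Z‖)
    (htie : ‖vp d c v₁‖ = ‖hp d c v₀‖) : SWitness d c Λ v₀ v₁ := by
  have hpos0 := pos_norms hN h0.1 h0.2.1
  have hpos1 := pos_norms hN h1.1 h1.2.1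
  have hha : ‖hp d c v₁‖ < ‖hp d c v₀‖ := height_antitone h0 h1 hlt
  have hlt1 : ‖hp d c v₁‖ < ‖vp d c v₁‖ := by rw [htie]; exact hha
  -- linear independence
  have hli : LinearIndependent ℝ ![v₀, v₁] := by
    rw [LinearIndependent.pair_iff]
    intro s t hst
    by_cases hs : s = 0
    · subst hs
      rw [zero_smul, zero_add] at hst
      rcases smul_eq_zero.mp hst with h | h
      · exact ⟨rfl, h⟩
      · exact absurd h h1.2.1
    · exfalso
      have hne : s • v₀ = -(t • v₁) := by
        rw [eq_neg_iff_add_eq_zero]; exact hst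
      have hhp : |s| * ‖hp d c v₀‖ = |t| * ‖hp d c v₁‖ := by
        have := congrArg (fun x => ‖hp d c x‖) hne
        rw [norm_hp_neg] at this
        have e1 : hp d c (s • v₀) = s • hp d c v₀ := rfl
        have e2 : hp d c (t • v₁) = t • hp d c v₁ := rfl
        rw [e1, e2, norm_smul, norm_smul, Real.norm_eq_abs, Real.norm_eq_abs] at this
        exact this
      have hvp : |s| * ‖vp d c v₀‖ = |t| * ‖vp d c v₁‖ := by
        have := congrArg (fun x => ‖vp d c x‖) hne
        rw [norm_vp_neg] at this
        have e1 : vp d c (s • v₀) = s • vp d c v₀ := rfl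
        have e2 : vp d c (t • v₁) = t • vp d c v₁ := rfl
        rw [e1, e2, norm_smul, norm_smul, Real.norm_eq_abs, Real.norm_eq_abs] at this
        exact this
      have hsa : 0 < |s| := abs_pos.mpr hs
      have hta : 0 < |t| := by
        by_contra h
        push_neg at h
        have : |t| = 0 := le_antisymm h (abs_nonneg t)
        rw [this, zero_mul] at hhp
        nlinarith [hpos0.1]
      nlinarith [hpos0.1, hpos0.2, hpos1.1, hpos1.2]
  -- the lower bound for all lattice vectors
  have hlow : ∀ y ∈ Λ, y ≠ 0 → ‖hp d c v₀‖ ≤ fullNorm d c y := by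
    intro y hy hy0
    by_cases hcase : ‖hp d c v₀‖ ≤ ‖hp d c y‖
    · exact le_trans hcase (le_max_left _ _)
    · push_neg at hcase
      obtain ⟨Y, hYmin, hYh, hYv⟩ := exists_dominating_min hfin hN hy hy0
      have hYh' : ‖hp d c Y‖ < ‖hp d c v₀‖ := lt_of_le_of_lt hYh hcase
      have hYgt : ‖vp d c v₀‖ < ‖vp d c Y‖ := by
        rcases lt_trichotomy ‖vp d c Y‖ ‖vp d c v₀‖ with h | h | h
        · exact absurd (height_antitone hYmin h0 h) (by linarith)
        · rcases eq_or_neg_of_vp_eq hN hYmin.1 h0.1 hYmin.2.1 h0.2.1 h with rfl | rfl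
          · exact absurd rfl hYh'.ne
          · exact absurd (norm_hp_neg v₀) hYh'.ne
        · exact h
      have := hcons Y hYmin hYgt
      calc ‖hp d c v₀‖ = ‖vp d c v₁‖ := htie.symm
      _ ≤ ‖vp d c Y‖ := this
      _ ≤ ‖vp d c y‖ := hYv
      _ ≤ fullNorm d c y := le_max_right _ _
  have hlam : lambda1 d c Λ = ‖hp d c v₀‖ := by
    apply IsLeast.csInf_eq
    constructor
    · refine ⟨v₀, ⟨h0.1, h0.2.1⟩, ?_⟩
      rw [fullNorm, max_eq_left]
      rw [← htie]
      exact hlt.le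
    · rintro _ ⟨y, ⟨hy, hy0⟩, rfl⟩
      exact hlow y hy hy0
  -- the ball condition
  refine ⟨h0.1, h1.1, hli, hlt1, hlt, htie, ?_⟩
  intro x hx hx0 hxb
  rw [hlam] at hxb
  have hxh : ‖hp d c x‖ ≤ ‖hp d c v₀‖ := le_trans (le_max_left _ _) hxb
  have hxv : ‖vp d c x‖ ≤ ‖vp d c v₁‖ := by
    rw [htie]; exact le_trans (le_max_right _ _) hxb
  rcases eq_or_lt_of_le hxh with heq' | hlt'
  · rcases eq_or_neg_of_hp_eq hN hx h0.1 hx0 h0.2.1 heq' with rfl | rfl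
    · exact Or.inl rfl
    · exact Or.inr (Or.inl (neg_neg v₀ ▸ rfl))
  · obtain ⟨Y, hYmin, hYh, hYv⟩ := exists_dominating_min hfin hN hx hx0
    have hYh' : ‖hp d c Y‖ < ‖hp d c v₀‖ := lt_of_le_of_lt hYh hlt'
    have hYgt : ‖vp d c v₀‖ < ‖vp d c Y‖ := by
      rcases lt_trichotomy ‖vp d c Y‖ ‖vp d c v₀‖ with h | h | h
      · exact absurd (height_antitone hYmin h0 h) (by linarith)
      · rcases eq_or_neg_of_vp_eq hN hYmin.1 h0.1 hYmin.2.1 h0.2.1 h with rfl | rfl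
        · exact absurd rfl hYh'.ne
        · exact absurd (norm_hp_neg v₀) hYh'.ne
      · exact h
    have h1' : ‖vp d c v₁‖ ≤ ‖vp d c x‖ := le_trans (hcons Y hYmin hYgt) hYv
    have : ‖vp d c x‖ = ‖vp d c v₁‖ := le_antisymm hxv h1'
    rcases eq_or_neg_of_vp_eq hN hx h1.1 hx0 h1.2.1 this with rfl | rfl
    · exact Or.inr (Or.inr (Or.inl rfl))
    · exact Or.inr (Or.inr (Or.inr (neg_neg v₁ ▸ rfl)))

/-- The norms of the witness vectors are uniquely determined. -/
lemma SWitness_norms_unique (hfin : ∀ R : ℝ, {x | x ∈ Λ ∧ fullNorm d c x ≤ R}.Finite)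
    {a b a' b' : Fin (d + c) → ℝ}
    (h : SWitness d c Λ a b) (h' : SWitness d c Λ a' b') :
    ‖hp d c a'‖ = ‖hp d c a‖ ∧ ‖vp d c a'‖ = ‖vp d c a‖ ∧
      ‖hp d c b'‖ = ‖hp d c b‖ ∧ ‖vp d c b'‖ = ‖vp d c b‖ := by
  obtain ⟨hmin0, hmin1, hlam, _⟩ := SWitness_props hfin h
  obtain ⟨hmin0', hmin1', hlam', _⟩ := SWitness_props hfin h'
  obtain ⟨ha0, hb0, _, hlt1, hlt0, heq, hball⟩ := h
  obtain ⟨ha0', hb0', _, hlt1', hlt0', heq', hball'⟩ := h'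
  have hpa : ‖hp d c a'‖ = ‖hp d c a‖ := by rw [← hlam, hlam']
  have hfna' : fullNorm d c a' = lambda1 d c Λ := by
    rw [hlam, ← hpa, fullNorm, max_eq_left]
    rw [← heq']
    exact hlt0'.le
  have hfnb' : fullNorm d c b' = lambda1 d c Λ := by
    rw [hlam, fullNorm, max_eq_right hlt1'.le, heq', hpa]
  have hvb : ‖vp d c b‖ = ‖hp d c a‖ := heq
  have hb'mem : b' = a ∨ b' = -a ∨ b' = b ∨ b' = -b :=
    hball b' hb0' hmin1'.2.1 (le_of_eq hfnb')
  have ha'mem : a' = a ∨ a' = -a ∨ a' = b ∨ a' = -b :=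
    hball a' ha0' hmin0'.2.1 (le_of_eq hfna')
  have hvpb' : ‖vp d c b'‖ = ‖vp d c b‖ := by rw [heq', hpa, ← heq]
  have hb'hp : ‖hp d c b'‖ = ‖hp d c b‖ := by
    rcases hb'mem with h | h | h | h
    · rw [h] at hvpb'
      exact absurd hvpb' (ne_of_lt hlt0)
    · rw [h, norm_vp_neg] at hvpb'
      exact absurd hvpb' (ne_of_lt hlt0)
    · rw [h]
    · rw [h, norm_hp_neg]
  have ha'eq : ‖vp d c a'‖ = ‖vp d c a‖ := by
    rcases ha'mem with h | h | h | h
    · rw [h]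
    · rw [h, norm_vp_neg]
    · exfalso
      rw [h] at hpa
      rw [heq] at hlt1
      exact absurd hpa (ne_of_lt hlt1)
    · exfalso
      rw [h, norm_hp_neg] at hpa
      rw [heq] at hlt1
      exact absurd hpa (ne_of_lt hlt1)
  exact ⟨hpa, ha'eq, hb'hp, hvpb'⟩

end FRT
namespace FRT

variable {d c : ℕ} {Λ : Set (Fin (d + c) → ℝ)} {t : ℝ}

lemma gtMat_inv_mulVec' (t : ℝ) (x : Fin (d + c) → ℝ) :
    (gtMat d c t).mulVec ((gtMat d c (-t)).mulVec x) = x := by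
  have := gtMat_inv_mulVec (d := d) (c := c) (-t) x
  rwa [neg_neg] at this

lemma flow_image_eq (t : ℝ) (Λ : Set (Fin (d + c) → ℝ)) :
    (gtMat d c (-t)).mulVec '' ((gtMat d c t).mulVec '' Λ) = Λ := by
  rw [Set.image_image]
  have h : ∀ y : Fin (d + c) → ℝ, (gtMat d c (-t)).mulVec ((gtMat d c t).mulVec y) = y :=
    gtMat_inv_mulVec t
  calc (fun y => (gtMat d c (-t)).mulVec ((gtMat d c t).mulVec y)) '' Λ
      = (fun y => y) '' Λ := by
        apply congrFun (congrArg Set.image ?_) Λ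
        funext y
        exact h y
  _ = Λ := Set.image_id Λ

lemma norm_hp_le_flow_iff {x y : Fin (d + c) → ℝ} :
    ‖hp d c ((gtMat d c t).mulVec y)‖ ≤ ‖hp d c ((gtMat d c t).mulVec x)‖ ↔
      ‖hp d c y‖ ≤ ‖hp d c x‖ := by
  rw [norm_hp_gtMat, norm_hp_gtMat]
  exact mul_le_mul_iff_right₀ (Real.exp_pos _)

lemma norm_vp_le_flow_iff {x y : Fin (d + c) → ℝ} :
    ‖vp d c ((gtMat d c t).mulVec y)‖ ≤ ‖vp d c ((gtMat d c t).mulVec x)‖ ↔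
      ‖vp d c y‖ ≤ ‖vp d c x‖ := by
  rw [norm_vp_gtMat, norm_vp_gtMat]
  exact mul_le_mul_iff_right₀ (Real.exp_pos _)

lemma norm_vp_lt_flow_iff {x y : Fin (d + c) → ℝ} :
    ‖vp d c ((gtMat d c t).mulVec y)‖ < ‖vp d c ((gtMat d c t).mulVec x)‖ ↔
      ‖vp d c y‖ < ‖vp d c x‖ := by
  rw [norm_vp_gtMat, norm_vp_gtMat]
  exact mul_lt_mul_iff_right₀ (Real.exp_pos _)

lemma isMinVec_flow {x : Fin (d + c) → ℝ} (h : IsMinVec d c Λ x) :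
    IsMinVec d c ((gtMat d c t).mulVec '' Λ) ((gtMat d c t).mulVec x) := by
  refine ⟨⟨x, h.1, rfl⟩, gtMat_mulVec_ne_zero t h.2.1, ?_⟩
  rintro Y ⟨y, hy, rfl⟩ hY0 hYh hYv
  have hy0 : y ≠ 0 := by
    intro h0
    rw [h0, gtMat_mulVec_zero] at hY0
    exact hY0 rfl
  obtain ⟨e1, e2⟩ := h.2.2 y hy hy0 (norm_hp_le_flow_iff.mp hYh) (norm_vp_le_flow_iff.mp hYv)
  constructor
  · rw [norm_hp_gtMat, norm_hp_gtMat, e1]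
  · rw [norm_vp_gtMat, norm_vp_gtMat, e2]

lemma isMinVec_flow_iff {x : Fin (d + c) → ℝ} :
    IsMinVec d c ((gtMat d c t).mulVec '' Λ) ((gtMat d c t).mulVec x) ↔ IsMinVec d c Λ x := by
  constructor
  · intro h
    have h2 := isMinVec_flow (t := -t) h
    rw [flow_image_eq, gtMat_inv_mulVec] at h2
    exact h2
  · exact isMinVec_flow

lemma NPred_flow (hN : ¬ NPred d c Λ) : ¬ NPred d c ((gtMat d c t).mulVec '' Λ) := by
  intro h
  apply hN
  have hexp : (0 : ℝ) < Real.exp (c * t) := Real.exp_pos _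
  have hexp' : (0 : ℝ) < Real.exp (-(d * t)) := Real.exp_pos _
  rcases h with ⟨V₁, ⟨u₁, hu₁, rfl⟩, V₂, ⟨u₂, hu₂, rfl⟩, h10, h20, hne, hnne, hor⟩ |
    ⟨V, ⟨u, hu, rfl⟩, hV0, hor⟩
  · left
    have hu10 : u₁ ≠ 0 := by
      intro h0; rw [h0, gtMat_mulVec_zero] at h10; exact h10 rfl
    have hu20 : u₂ ≠ 0 := by
      intro h0; rw [h0, gtMat_mulVec_zero] at h20; exact h20 rfl
    refine ⟨u₁, hu₁, u₂, hu₂, hu10, hu20, fun h => hne (by rw [h]),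
      fun h => hnne (by rw [h, gtMat_mulVec_neg]), ?_⟩
    rcases hor with ⟨h1, h2⟩ | ⟨h1, h2⟩
    · left
      rw [norm_hp_gtMat, norm_hp_gtMat] at h1
      rw [norm_hp_gtMat] at h2
      constructor
      · exact mul_left_cancel₀ (ne_of_gt hexp) h1
      · nlinarith [norm_nonneg (hp d c u₁)]
    · right
      rw [norm_vp_gtMat, norm_vp_gtMat] at h1
      rw [norm_vp_gtMat] at h2
      constructor
      · exact mul_left_cancel₀ (ne_of_gt hexp') h1
      · nlinarith [norm_nonneg (vp d c u₁)]
  · right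
    have hu0 : u ≠ 0 := by
      intro h0; rw [h0, gtMat_mulVec_zero] at hV0; exact hV0 rfl
    refine ⟨u, hu, hu0, ?_⟩
    rcases hor with h1 | h1
    · left
      rw [hp_gtMat] at h1
      rcases smul_eq_zero.mp h1 with h | h
      · exact absurd h (ne_of_gt hexp)
      · exact h
    · right
      rw [vp_gtMat] at h1
      rcases smul_eq_zero.mp h1 with h | h
      · exact absurd h (ne_of_gt hexp')
      · exact h

end FRT

/-- **Return time formula on `S`.** Let `Λ = M·ℤ^{d+c}` be a unimodular lattice in
`S ∖ 𝒩`. Then the first return time `τ(Λ) = inf{t > 0 : g_tΛ ∈ S}` is finite (the set of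
return times is nonempty), the first return `R(Λ) = g_{τ(Λ)}Λ` belongs to `S`, and
`τ(Λ) = (1/(d+c))·(ρ(R(Λ)) + ρ*(Λ))`, where `ρ(Γ) = ln(|v₁(Γ)|_- / |v₀(Γ)|_-)` and
`ρ*(Γ) = ln(|v₀(Γ)|_+ / |v₁(Γ)|_+)` for the vectors `v₀(Γ), v₁(Γ)` attached to `Γ ∈ S`. -/
theorem first_return_time_formula (d c : ℕ) (hd : 0 < d) (hc : 0 < c)
    (M : Matrix (Fin (d + c)) (Fin (d + c)) ℝ) (hM : M.det = 1)
    (hS : SPred d c (latSet M)) (hN : ¬ NPred d c (latSet M)) :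
    {t : ℝ | 0 < t ∧ SPred d c (latSet (gtMat d c t * M))}.Nonempty ∧
    SPred d c (latSet (gtMat d c
      (sInf {t : ℝ | 0 < t ∧ SPred d c (latSet (gtMat d c t * M))}) * M)) ∧
    ∀ v₀ v₁ : Fin (d + c) → ℝ, SWitness d c (latSet M) v₀ v₁ →
      ∀ w₀ w₁ : Fin (d + c) → ℝ,
        SWitness d c (latSet (gtMat d c
          (sInf {t : ℝ | 0 < t ∧ SPred d c (latSet (gtMat d c t * M))}) * M)) w₀ w₁ →
        sInf {t : ℝ | 0 < t ∧ SPred d c (latSet (gtMat d c t * M))} =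
          (1 / (d + c : ℝ)) *
            (Real.log (‖vp d c w₁‖ / ‖vp d c w₀‖) +
              Real.log (‖hp d c v₀‖ / ‖hp d c v₁‖)) := by
  classical
  open FRT in
  set Λ : Set (Fin (d + c) → ℝ) := latSet M with hΛdef
  have hfin : ∀ R : ℝ, {x | x ∈ Λ ∧ fullNorm d c x ≤ R}.Finite :=
    FRT.latSet_bounded_finite M hM
  have hsm : ∀ ε : ℝ, 0 < ε → ∃ y ∈ Λ, y ≠ 0 ∧ ‖hp d c y‖ < ε :=
    fun _ hε => FRT.latSet_exists_small_hp hd hc M hM hε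
  obtain ⟨v₀, v₁, hw⟩ := hS
  obtain ⟨hmin0, hmin1, hlam, hcons⟩ := FRT.SWitness_props hfin hw
  have hlt1 : ‖hp d c v₁‖ < ‖vp d c v₁‖ := hw.2.2.2.1
  have hlt0 : ‖vp d c v₀‖ < ‖vp d c v₁‖ := hw.2.2.2.2.1
  have htie : ‖vp d c v₁‖ = ‖hp d c v₀‖ := hw.2.2.2.2.2.1
  obtain ⟨v₂, h2min, h2gt, h2next⟩ := FRT.exists_next hfin hN hsm hmin1
  have hpos0 := FRT.pos_norms hN hmin0.1 hmin0.2.1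
  have hpos1 := FRT.pos_norms hN hmin1.1 hmin1.2.1
  have hpos2 := FRT.pos_norms hN h2min.1 h2min.2.1
  set n : ℝ := (d : ℝ) + (c : ℝ) with hn
  have hnpos : (0 : ℝ) < n := by
    rw [hn]
    have : (1 : ℝ) ≤ (d : ℝ) := by exact_mod_cast hd
    have : (1 : ℝ) ≤ (c : ℝ) := by exact_mod_cast hc
    linarith
  set τ : ℝ := Real.log (‖vp d c v₂‖ / ‖hp d c v₁‖) / n with hτdef
  have hratio : 1 < ‖vp d c v₂‖ / ‖hp d c v₁‖ := by
    rw [lt_div_iff₀ hpos1.1, one_mul]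
    exact lt_trans hlt1 h2gt
  have hτpos : 0 < τ := div_pos (Real.log_pos hratio) hnpos
  have hexp_eq : Real.exp (n * τ) = ‖vp d c v₂‖ / ‖hp d c v₁‖ := by
    rw [hτdef, mul_div_cancel₀ _ (ne_of_gt hnpos)]
    exact Real.exp_log (lt_trans one_pos hratio)
  have hsplit : Real.exp ((c : ℝ) * τ) = Real.exp (-((d : ℝ) * τ)) * Real.exp (n * τ) := by
    rw [← Real.exp_add]
    congr 1
    rw [hn]; ring
  have htieτ : Real.exp ((c : ℝ) * τ) * ‖hp d c v₁‖
      = Real.exp (-((d : ℝ) * τ)) * ‖vp d c v₂‖ := by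
    rw [hsplit, mul_assoc]
    congr 1
    rw [hexp_eq, div_mul_cancel₀ _ (ne_of_gt hpos1.1)]
  -- the flowed lattice at time τ
  set Γ : Set (Fin (d + c) → ℝ) := (gtMat d c τ).mulVec '' Λ with hΓdef
  have hΛ' : latSet (gtMat d c τ * M) = Γ := FRT.latSet_gtMat_mul τ M
  have hdet' : (gtMat d c τ * M).det = 1 := by
    rw [Matrix.det_mul, gtMat_det, hM, one_mul]
  have hfinΓ : ∀ R : ℝ, {x | x ∈ Γ ∧ fullNorm d c x ≤ R}.Finite := by
    simp only [← hΛ']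
    exact FRT.latSet_bounded_finite _ hdet'
  have hNΓ : ¬ NPred d c Γ := FRT.NPred_flow hN
  -- the witness for the return
  have hw₀min := FRT.isMinVec_flow (t := τ) hmin1
  have hw₁min := FRT.isMinVec_flow (t := τ) h2min
  have hltw : ‖vp d c ((gtMat d c τ).mulVec v₁)‖ < ‖vp d c ((gtMat d c τ).mulVec v₂)‖ :=
    FRT.norm_vp_lt_flow_iff.mpr h2gt
  have hconsw : ∀ Z, IsMinVec d c Γ Z →
      ‖vp d c ((gtMat d c τ).mulVec v₁)‖ < ‖vp d c Z‖ →
      ‖vp d c ((gtMat d c τ).mulVec v₂)‖ ≤ ‖vp d c Z‖ := by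
    intro Z hZ hZgt
    obtain ⟨z, hz, rfl⟩ := hZ.1
    have hzmin : IsMinVec d c Λ z := FRT.isMinVec_flow_iff.mp hZ
    exact FRT.norm_vp_le_flow_iff.mpr
      (h2next z hzmin (FRT.norm_vp_lt_flow_iff.mp hZgt))
  have htiew : ‖vp d c ((gtMat d c τ).mulVec v₂)‖ = ‖hp d c ((gtMat d c τ).mulVec v₁)‖ := by
    rw [FRT.norm_vp_gtMat, FRT.norm_hp_gtMat]
    exact htieτ.symm
  have hSW' : SWitness d c Γ ((gtMat d c τ).mulVec v₁) ((gtMat d c τ).mulVec v₂) :=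
    FRT.SWitness_mk hfinΓ hNΓ hw₀min hw₁min hltw hconsw htiew
  have hSP : SPred d c (latSet (gtMat d c τ * M)) := by
    rw [hΛ']
    exact ⟨_, _, hSW'⟩
  have hτmem : τ ∈ {t : ℝ | 0 < t ∧ SPred d c (latSet (gtMat d c t * M))} := ⟨hτpos, hSP⟩
  -- the lower bound: any return time is at least τ
  have hlb : ∀ s ∈ {t : ℝ | 0 < t ∧ SPred d c (latSet (gtMat d c t * M))}, τ ≤ s := by
    intro s hs
    obtain ⟨hs0, hSPs⟩ := hs
    obtain ⟨w₀', w₁', hw'⟩ := hSPs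
    have hΛs : latSet (gtMat d c s * M) = (gtMat d c s).mulVec '' Λ :=
      FRT.latSet_gtMat_mul s M
    rw [hΛs] at hw'
    have hfins : ∀ R : ℝ, {x | x ∈ (gtMat d c s).mulVec '' Λ ∧ fullNorm d c x ≤ R}.Finite := by
      simp only [← hΛs]
      exact FRT.latSet_bounded_finite _ (by rw [Matrix.det_mul, gtMat_det, hM, one_mul])
    obtain ⟨hm0', hm1', hlam', hcons'⟩ := FRT.SWitness_props hfins hw'
    obtain ⟨u₀, hu₀, hu₀e⟩ := hm0'.1
    obtain ⟨u₁, hu₁, hu₁e⟩ := hm1'.1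
    subst hu₀e
    subst hu₁e
    have hu₀min : IsMinVec d c Λ u₀ := FRT.isMinVec_flow_iff.mp hm0'
    have hu₁min : IsMinVec d c Λ u₁ := FRT.isMinVec_flow_iff.mp hm1'
    have hu01 : ‖vp d c u₀‖ < ‖vp d c u₁‖ := FRT.norm_vp_lt_flow_iff.mp hw'.2.2.2.2.1
    have hucons : ∀ z, IsMinVec d c Λ z → ‖vp d c u₀‖ < ‖vp d c z‖ →
        ‖vp d c u₁‖ ≤ ‖vp d c z‖ := fun z hz hzgt =>
      FRT.norm_vp_le_flow_iff.mp
        (hcons' _ (FRT.isMinVec_flow hz) (FRT.norm_vp_lt_flow_iff.mpr hzgt))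
    have hutie : Real.exp (-((d : ℝ) * s)) * ‖vp d c u₁‖
        = Real.exp ((c : ℝ) * s) * ‖hp d c u₀‖ := by
      have h := hw'.2.2.2.2.2.1
      rw [FRT.norm_vp_gtMat, FRT.norm_hp_gtMat] at h
      exact h
    have hu₀pos := FRT.pos_norms hN hu₀min.1 hu₀min.2.1
    have hu₁pos := FRT.pos_norms hN hu₁min.1 hu₁min.2.1
    have hexps : Real.exp (n * s) = ‖vp d c u₁‖ / ‖hp d c u₀‖ := by
      have h1 : ‖vp d c u₁‖ = Real.exp ((d : ℝ) * s) * (Real.exp ((c : ℝ) * s) * ‖hp d c u₀‖) := by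
        rw [← hutie, ← mul_assoc, ← Real.exp_add]
        simp
      rw [eq_div_iff (ne_of_gt hu₀pos.1), h1, ← mul_assoc, ← Real.exp_add]
      congr 2
      rw [hn]; ring
    -- compare the ratios
    have hkey : ‖vp d c v₂‖ / ‖hp d c v₁‖ ≤ ‖vp d c u₁‖ / ‖hp d c u₀‖ := by
      rcases lt_trichotomy ‖vp d c u₀‖ ‖vp d c v₁‖ with hlt' | heq' | hgt'
      · -- u₀ strictly below v₁ : contradiction with s > 0
        exfalso
        have hle1 : ‖vp d c u₁‖ / ‖hp d c u₀‖ ≤ 1 := by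
          rcases lt_trichotomy ‖vp d c u₀‖ ‖vp d c v₀‖ with h | h | h
          · have hpu₀ : ‖hp d c v₀‖ < ‖hp d c u₀‖ := FRT.height_antitone hu₀min hmin0 h
            have hv1 : ‖vp d c u₁‖ ≤ ‖vp d c v₀‖ := hucons v₀ hmin0 h
            rw [div_le_one hu₀pos.1]
            refine le_of_lt ?_
            calc ‖vp d c u₁‖ ≤ ‖vp d c v₀‖ := hv1
            _ < ‖vp d c v₁‖ := hlt0
            _ = ‖hp d c v₀‖ := htie
            _ ≤ ‖hp d c u₀‖ := hpu₀.le
          · have heq2 := FRT.eq_or_neg_of_vp_eq hN hu₀min.1 hmin0.1 hu₀min.2.1 hmin0.2.1 h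
            have hhp : ‖hp d c u₀‖ = ‖hp d c v₀‖ := (FRT.norms_eq_of_eq_or_neg heq2).1
            have hv1 : ‖vp d c u₁‖ ≤ ‖vp d c v₁‖ := by
              apply hucons v₁ hmin1
              rw [h]
              exact hlt0
            rw [div_le_one hu₀pos.1, hhp, ← htie]
            exact hv1
          · exact absurd (hcons u₀ hu₀min h) (not_le.mpr hlt')
        have : Real.exp (n * s) ≤ 1 := by rw [hexps]; exact hle1
        have hns : n * s ≤ 0 := Real.exp_le_one_iff.mp this
        nlinarith
      · -- u₀ is (up to sign) v₁
        have heq2 := FRT.eq_or_neg_of_vp_eq hN hu₀min.1 hmin1.1 hu₀min.2.1 hmin1.2.1 heq'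
        have hhp : ‖hp d c u₀‖ = ‖hp d c v₁‖ := (FRT.norms_eq_of_eq_or_neg heq2).1
        have h2le : ‖vp d c v₂‖ ≤ ‖vp d c u₁‖ := by
          apply h2next u₁ hu₁min
          rw [← heq']
          exact hu01
        exact div_le_div₀ hu₁pos.2.le h2le hu₀pos.1 (le_of_eq hhp)
      · -- u₀ strictly above v₁
        have h2le : ‖vp d c v₂‖ ≤ ‖vp d c u₀‖ := h2next u₀ hu₀min hgt'
        have hpu : ‖hp d c u₀‖ < ‖hp d c v₁‖ := FRT.height_antitone hmin1 hu₀min hgt'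
        have h2le' : ‖vp d c v₂‖ ≤ ‖vp d c u₁‖ := le_of_lt (lt_of_le_of_lt h2le hu01)
        exact div_le_div₀ hu₁pos.2.le h2le' hu₀pos.1 hpu.le
    have hmono : Real.exp (n * τ) ≤ Real.exp (n * s) := by
      rw [hexp_eq, hexps]
      exact hkey
    have := Real.exp_le_exp.mp hmono
    exact le_of_mul_le_mul_left (by linarith) hnpos
  have hsinf : sInf {t : ℝ | 0 < t ∧ SPred d c (latSet (gtMat d c t * M))} = τ :=
    le_antisymm (csInf_le ⟨τ, fun y hy => hlb y hy⟩ hτmem) (le_csInf ⟨τ, hτmem⟩ hlb)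
  refine ⟨⟨τ, hτmem⟩, ?_, ?_⟩
  · rw [hsinf]
    exact hSP
  · intro v₀' v₁' hw₀ w₀' w₁' hw₁'
    rw [hsinf] at hw₁' ⊢
    have hA := FRT.SWitness_norms_unique hfin hw hw₀
    have hw₁'' : SWitness d c Γ w₀' w₁' := by
      rw [hΛ'] at hw₁'
      exact hw₁'
    have hB := FRT.SWitness_norms_unique hfinΓ hSW' hw₁''
    have h1 : ‖vp d c w₁'‖ / ‖vp d c w₀'‖ = ‖vp d c v₂‖ / ‖vp d c v₁‖ := by
      rw [hB.2.2.2, hB.2.1, FRT.norm_vp_gtMat, FRT.norm_vp_gtMat,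
        mul_div_mul_left _ _ (ne_of_gt (Real.exp_pos _))]
    have h2 : ‖hp d c v₀'‖ / ‖hp d c v₁'‖ = ‖hp d c v₀‖ / ‖hp d c v₁‖ := by
      rw [hA.1, hA.2.2.1]
    rw [h1, h2]
    have hlogs : Real.log (‖vp d c v₂‖ / ‖vp d c v₁‖) + Real.log (‖hp d c v₀‖ / ‖hp d c v₁‖)
        = Real.log (‖vp d c v₂‖ / ‖hp d c v₁‖) := by
      rw [Real.log_div (ne_of_gt hpos2.2) (ne_of_gt hpos1.2),
        Real.log_div (ne_of_gt hpos0.1) (ne_of_gt hpos1.1),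
        Real.log_div (ne_of_gt hpos2.2) (ne_of_gt hpos1.1), ← htie]
      ring
    rw [hlogs, hτdef]
    have hne : (d : ℝ) + (c : ℝ) ≠ 0 := ne_of_gt hnpos
    field_simp
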